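/- Let G be a finite group with subgroups A and B such that G = AB, let p be a prime, and assume G is p-nilpotent. Suppose that p² does not divide the conjugacy class size |x^G| for every p-element x ∈ A ∪ B. If P is a Sylow p-subgroup of G, then the derived subgroup P' is contained in the Frattini subgroup Φ(P), Φ(P) is contained in the center Z(P), and P' is elementary abelian of order at most p². -/

import Mathlib

open Pointwise

/-- The conjugacy class size of `x`: the index of its centralizer. -/
noncomputable def classSize {G : Type*} [Group G] (x : G) : ℕ := (Subgroup.centralizer {x}).index

/-- `G = AB`: every element of the ambient group is a product of an element of `A`
and an element of `B`. -/
def IsFactorization {G : Type*} [Group G] (A B : Subgroup G) : Prop :=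
  ∀ g : G, ∃ a ∈ A, ∃ b ∈ B, g = a * b

/-- `A` and `B` are mutually permutable: `A` permutes with every subgroup of `B`
and `B` permutes with every subgroup of `A`. -/
def MutuallyPermutable {G : Type*} [Group G] (A B : Subgroup G) : Prop :=
  (∀ X : Subgroup G, X ≤ B → (A : Set G) * (X : Set G) = (X : Set G) * (A : Set G)) ∧
  (∀ X : Subgroup G, X ≤ A → (B : Set G) * (X : Set G) = (X : Set G) * (B : Set G))

/-- `x` has prime power order. -/
def HasPrimePowerOrder {G : Type*} [Group G] (x : G) : Prop :=
  ∃ q n : ℕ, q.Prime ∧ orderOf x = q ^ n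

/-- `G` is `p`-nilpotent: it has a normal Hall `p'`-subgroup (a normal `p`-complement). -/
def IsPNilpotent (p : ℕ) (G : Type*) [Group G] : Prop :=
  ∃ H : Subgroup G, H.Normal ∧ ¬ p ∣ Nat.card H ∧ ∃ n : ℕ, H.index = p ^ n

/-- A group is elementary abelian (for the prime `p`) if it is abelian and every
nontrivial element has order `p`. -/
def IsElementaryAbelian (p : ℕ) (P : Type*) [Group P] : Prop :=
  (∀ a b : P, a * b = b * a) ∧ ∀ a : P, a ≠ 1 → orderOf a = p

/-- `K` is the `p`-core `O_p(G)`: the largest normal `p`-subgroup of `G`. -/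
def IsPCore (p : ℕ) {G : Type*} [Group G] (K : Subgroup G) : Prop :=
  K.Normal ∧ IsPGroup p K ∧ ∀ L : Subgroup G, L.Normal → IsPGroup p L → L ≤ K

/-- `F` is the Fitting subgroup of `G`: the largest normal nilpotent subgroup. -/
def IsFittingSubgroup {G : Type*} [Group G] (F : Subgroup G) : Prop :=
  F.Normal ∧ Group.IsNilpotent F ∧
    ∀ L : Subgroup G, L.Normal → Group.IsNilpotent L → L ≤ F

/-- A group is supersoluble if it has a normal series all of whose factors are cyclic:
there is a monotone chain of normal subgroups from `⊥` to `⊤` such that each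
`H (i+1)` is generated by `H i` together with a single element (i.e. each factor
`H (i+1) / H i` is cyclic). -/
def IsSupersoluble (G : Type*) [Group G] : Prop :=
  ∃ (n : ℕ) (H : Fin (n + 1) → Subgroup G),
    Monotone H ∧ H 0 = ⊥ ∧ H (Fin.last n) = ⊤ ∧ (∀ i, (H i).Normal) ∧
    ∀ i : Fin n, ∃ x ∈ H i.succ, H i.succ ≤ H i.castSucc ⊔ Subgroup.zpowers x

/-- A group is `p`-soluble if it has a normal series each of whose factors is either
a `p`-group or a `p'`-group (the order of the factor `H (i+1) / H i` is the relative
index `(H i).relindex (H (i+1))`). -/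
def IsPSoluble (p : ℕ) (G : Type*) [Group G] : Prop :=
  ∃ (n : ℕ) (H : Fin (n + 1) → Subgroup G),
    Monotone H ∧ H 0 = ⊥ ∧ H (Fin.last n) = ⊤ ∧ (∀ i, (H i).Normal) ∧
    ∀ i : Fin n, (∃ k : ℕ, (H i.castSucc).relIndex (H i.succ) = p ^ k) ∨
      ¬ p ∣ (H i.castSucc).relIndex (H i.succ)

/-- A group is `p`-supersoluble if it has a normal series each of whose factors is
either a `p'`-group or cyclic of order `p`. -/
def IsPSupersoluble (p : ℕ) (G : Type*) [Group G] : Prop :=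
  ∃ (n : ℕ) (H : Fin (n + 1) → Subgroup G),
    Monotone H ∧ H 0 = ⊥ ∧ H (Fin.last n) = ⊤ ∧ (∀ i, (H i).Normal) ∧
    ∀ i : Fin n, (H i.castSucc).relIndex (H i.succ) = p ∨
      ¬ p ∣ (H i.castSucc).relIndex (H i.succ)


/-!
Projecting along the normal `p`-complement identifies `P` with `G ⧸ N`, so `P = ST` with `S`, `T`
the images of `A`, `B`; replacing an element of a factor by its `p`-part shows that
`|P : C_P(x)|` divides `p` for every `x ∈ S ∪ T`. Such a centralizer is `P` or maximal, hence
contains `Φ(P)`, so `Φ(P)` centralizes `S` and `T`; as `P` is nilpotent, `P' ≤ Φ(P) ≤ Z(P)`.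
In class two, `g ↦ ⁅x, g⁆` is a homomorphism whose image `K_x` has order `|P : C_P(x)|`, and
the nontrivial `K_x` with `x ∈ S` all coincide (likewise for `T`). As `⁅ab, g⁆ = ⁅a, g⁆⁅b, g⁆`,
`P'` lies in the product of two central subgroups of order at most `p`.
-/

open scoped commutatorElement
open Subgroup

section General

variable {Q : Type*} [Group Q]

lemma commutator_le_of_isCoatom [Group.IsNilpotent Q] {M : Subgroup Q} (hM : IsCoatom M) :
    commutator Q ≤ M := by
  have : M.Normal := Group.normalizerCondition_of_isNilpotent.normal_of_coatom M hM
  obtain ⟨g, hg⟩ : ∃ g, g ∉ M := SetLike.exists_not_mem_of_ne_top _ hM.1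
  have hsup : M ⊔ zpowers g = ⊤ :=
    hM.2 _ (left_lt_sup.mpr fun h => hg (h (mem_zpowers g)))
  have : IsCyclic (Q ⧸ M) := by
    refine isCyclic_iff_exists_zpowers_eq_top.mpr ⟨QuotientGroup.mk' M g, ?_⟩
    rw [← MonoidHom.map_zpowers, ← bot_sup_eq (map _ _), ← QuotientGroup.map_mk'_self M,
      ← Subgroup.map_sup, hsup, ← MonoidHom.range_eq_map, QuotientGroup.range_mk']
  let _ := IsCyclic.commGroup (α := Q ⧸ M)
  simpa using Abelianization.commutator_subset_ker (QuotientGroup.mk' M)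

lemma commutator_le_frattini [Group.IsNilpotent Q] : commutator Q ≤ frattini Q :=
  le_iInf₂ fun _ hM => commutator_le_of_isCoatom hM

lemma isCoatom_of_index_dvd_prime {p : ℕ} (hp : p.Prime) {C : Subgroup Q} (hC : C.index ∣ p)
    (hC' : C ≠ ⊤) : IsCoatom C := by
  have hCp : C.index = p :=
    (hp.eq_one_or_self_of_dvd _ hC).resolve_left fun h => hC' (index_eq_one.mp h)
  refine ⟨hC', fun K hCK => ?_⟩
  have hmul := relIndex_mul_index hCK.le
  rw [hCp] at hmul
  rcases hp.eq_one_or_self_of_dvd _ (Dvd.intro_left _ hmul) with h | h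
  · exact index_eq_one.mp h
  · rw [h, Nat.mul_eq_right hp.ne_zero, relIndex_eq_one] at hmul
    exact absurd (le_antisymm hCK.le hmul) hCK.ne

lemma eq_zpowers_of_card_dvd_prime [Finite Q] {p : ℕ} (hp : p.Prime) {U : Subgroup Q}
    (hU : Nat.card U ∣ p) {z : Q} (hzU : z ∈ U) (hz : z ≠ 1) : U = zpowers z := by
  have hle : zpowers z ≤ U := zpowers_le.mpr hzU
  have hcard : Nat.card (zpowers z) = p :=
    (hp.eq_one_or_self_of_dvd _ ((card_dvd_of_le hle).trans hU)).resolve_left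
      (by rwa [Nat.card_zpowers, orderOf_eq_one_iff])
  exact (eq_of_le_of_card_ge hle (hcard ▸ Nat.le_of_dvd hp.pos hU)).symm

lemma eq_of_card_dvd_prime_of_mem [Finite Q] {p : ℕ} (hp : p.Prime)
    {U V : Subgroup Q} (hU : Nat.card U ∣ p) (hV : Nat.card V ∣ p) {z : Q} (hz : z ≠ 1)
    (hzU : z ∈ U) (hzV : z ∈ V) : U = V := by
  rw [eq_zpowers_of_card_dvd_prime hp hU hzU hz, eq_zpowers_of_card_dvd_prime hp hV hzV hz]

lemma commutatorElement_eq_one_iff_mem_centralizer {x g : Q} :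
    ⁅x, g⁆ = 1 ↔ g ∈ centralizer {x} := by
  rw [commutatorElement_eq_one_iff_mul_comm, mem_centralizer_singleton_iff, eq_comm]

lemma index_centralizer_map_dvd {G : Type*} [Group G] {f : G →* Q}
    (hf : Function.Surjective f) (w : G) :
    (centralizer {f w}).index ∣ (centralizer {w}).index := by
  refine (index_dvd_of_le ?_).trans (index_map_dvd _ hf)
  simpa using map_centralizer_le_centralizer_image {w} f

lemma centralizer_le_centralizer_of_mem_zpowers {x y : Q} (h : x ∈ zpowers y) :
    centralizer {y} ≤ centralizer {x} := by
  intro g hg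
  obtain ⟨k, rfl⟩ := mem_zpowers_iff.mp h
  rw [mem_centralizer_singleton_iff] at hg ⊢
  exact Commute.zpow_right hg k

lemma exists_pow_orderOf_eq_prime_pow [Finite Q] {p : ℕ} (hp : p.Prime) (w : Q) :
    ∃ m, ¬ p ∣ m ∧ ∃ k, orderOf (w ^ m) = p ^ k := by
  have hw : orderOf w ≠ 0 := (orderOf_pos w).ne'
  refine ⟨ordCompl[p] (orderOf w), Nat.not_dvd_ordCompl hp hw, _,
    orderOf_pow_orderOf_div hw (Nat.ordProj_dvd _ p)⟩

end General

lemma IsFactorization.symm {G : Type*} [Group G] {A B : Subgroup G} (h : IsFactorization A B) :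
    IsFactorization B A := fun g => by
  obtain ⟨a, ha, b, hb, hab⟩ := h g⁻¹
  exact ⟨b⁻¹, inv_mem hb, a⁻¹, inv_mem ha, by rw [← mul_inv_rev, ← hab, inv_inv]⟩

lemma IsFactorization.map {G Q : Type*} [Group G] [Group Q] {A B : Subgroup G}
    (h : IsFactorization A B) {f : G →* Q} (hf : Function.Surjective f) :
    IsFactorization (A.map f) (B.map f) := fun q => by
  obtain ⟨g, rfl⟩ := hf q
  obtain ⟨a, ha, b, hb, rfl⟩ := h g
  exact ⟨f a, mem_map_of_mem f ha, f b, mem_map_of_mem f hb, map_mul f a b⟩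

lemma IsFactorization.exists_notMem {G : Type*} [Group G] {S T : Subgroup G}
    (h : IsFactorization S T) {C : Subgroup G} (hC : C ≠ ⊤) :
    ∃ w, (w ∈ S ∨ w ∈ T) ∧ w ∉ C := by
  obtain ⟨g, hg⟩ := SetLike.exists_not_mem_of_ne_top _ hC
  obtain ⟨a, ha, b, hb, rfl⟩ := h g
  by_cases haC : a ∈ C
  · exact ⟨b, Or.inr hb, fun hbC => hg (mul_mem haC hbC)⟩
  · exact ⟨a, Or.inl ha, haC⟩

section ClassTwo

variable {Q : Type*} [Group Q]

lemma commutatorElement_mem_center (hc : commutator Q ≤ center Q) (x g : Q) :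
    ⁅x, g⁆ ∈ center Q :=
  hc (commutator_mem_commutator (mem_top x) (mem_top g))

def commutatorLeftHom (hc : commutator Q ≤ center Q) (x : Q) : Q →* Q where
  toFun g := ⁅x, g⁆
  map_one' := commutatorElement_one_right x
  map_mul' g h := by
    have hgh : ⁅x, g * h⁆ = ⁅x, g⁆ * (g * ⁅x, h⁆ * g⁻¹) := by
      simp only [commutatorElement_def]; group
    rw [hgh, mem_center_iff.mp (commutatorElement_mem_center hc x h) g, mul_inv_cancel_right]

variable (hc : commutator Q ≤ center Q)
include hc

lemma commutatorElement_mul_left (x y g : Q) : ⁅x * y, g⁆ = ⁅x, g⁆ * ⁅y, g⁆ := by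
  have hy := mem_center_iff.mp (commutatorElement_mem_center hc y g)
  calc ⁅x * y, g⁆ = x * ⁅y, g⁆ * x⁻¹ * ⁅x, g⁆ := by simp only [commutatorElement_def]; group
    _ = ⁅x, g⁆ * ⁅y, g⁆ := by rw [hy x, mul_inv_cancel_right, hy]

lemma mem_range_commutatorLeftHom (x g : Q) : ⁅x, g⁆ ∈ (commutatorLeftHom hc x).range :=
  ⟨g, rfl⟩

lemma mem_range_commutatorLeftHom_right (x g : Q) :
    ⁅x, g⁆ ∈ (commutatorLeftHom hc g).range := by
  simpa only [commutatorElement_inv] using inv_mem (mem_range_commutatorLeftHom hc g x)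

lemma card_range_commutatorLeftHom (x : Q) :
    Nat.card (commutatorLeftHom hc x).range = (centralizer {x}).index := by
  rw [← index_ker]
  congr
  ext g
  exact commutatorElement_eq_one_iff_mem_centralizer

lemma range_commutatorLeftHom_le_center (x : Q) : (commutatorLeftHom hc x).range ≤ center Q := by
  rintro - ⟨g, rfl⟩
  exact commutatorElement_mem_center hc x g

end ClassTwo

section Central

variable {Q : Type*} [Group Q]

lemma normal_of_le_center {V : Subgroup Q} (hV : V ≤ center Q) : V.Normal :=
  ⟨fun v hv g => by rwa [mem_center_iff.mp (hV hv) g, mul_inv_cancel_right]⟩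

lemma card_sup_le_mul (U V : Subgroup Q) [V.Normal] :
    Nat.card ↥(U ⊔ V) ≤ Nat.card U * Nat.card V := by
  change Nat.card ((U ⊔ V : Subgroup Q) : Set Q) ≤ Nat.card (U : Set Q) * Nat.card (V : Set Q)
  rw [mul_normal]
  exact Set.natCard_mul_le

lemma pow_eq_one_of_mem_sup {p : ℕ} {U V : Subgroup Q} (hU : U ≤ center Q)
    (hUp : Nat.card U ∣ p) (hVp : Nat.card V ∣ p) {w : Q} (hw : w ∈ U ⊔ V) : w ^ p = 1 := by
  have : U.Normal := normal_of_le_center hU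
  have hw' : w ∈ ((V ⊔ U : Subgroup Q) : Set Q) := sup_comm U V ▸ hw
  rw [mul_normal] at hw'
  obtain ⟨v, hv, u, hu, rfl⟩ := hw'
  have hpow {W : Subgroup Q} (hWp : Nat.card W ∣ p) {x : Q} (hx : x ∈ W) : x ^ p = 1 :=
    orderOf_dvd_iff_pow_eq_one.mp ((W.orderOf_dvd_natCard hx).trans hWp)
  have hvu : Commute v u := mem_center_iff.mp (hU hu) v
  change (v * u) ^ p = 1
  rw [hvu.mul_pow, hpow hVp hv, hpow hUp hu, one_mul]

end Central

section Factorization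

variable {Q : Type*} [Group Q] {p : ℕ} (hp : p.Prime) {S T : Subgroup Q}
  (hfac : IsFactorization S T)
  (hidx : ∀ x, x ∈ S ∨ x ∈ T → (centralizer {x}).index ∣ p)
include hp hfac hidx

lemma frattini_le_center_of_isFactorization : frattini Q ≤ center Q := by
  have hfr (x : Q) (hx : x ∈ S ∨ x ∈ T) : frattini Q ≤ centralizer {x} := by
    by_cases htop : centralizer {x} = ⊤
    · exact htop ▸ le_top
    · exact frattini_le_coatom (isCoatom_of_index_dvd_prime hp (hidx x hx) htop)
  intro z hz
  rw [mem_center_iff]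
  intro g
  obtain ⟨a, ha, b, hb, rfl⟩ := hfac g
  have hza : z * a = a * z := mem_centralizer_singleton_iff.mp (hfr a (.inl ha) hz)
  have hzb : z * b = b * z := mem_centralizer_singleton_iff.mp (hfr b (.inr hb) hz)
  rw [mul_assoc, ← hzb, ← mul_assoc, ← hza, mul_assoc]

variable [Finite Q] (hc : commutator Q ≤ center Q)
include hc

lemma range_commutatorLeftHom_eq {x y : Q} (hx : x ∈ S) (hy : y ∈ S)
    (hxc : centralizer {x} ≠ ⊤) (hyc : centralizer {y} ≠ ⊤) :
    (commutatorLeftHom hc x).range = (commutatorLeftHom hc y).range := by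
  have hcard (w : Q) (hw : w ∈ S ∨ w ∈ T) : Nat.card (commutatorLeftHom hc w).range ∣ p :=
    card_range_commutatorLeftHom hc w ▸ hidx w hw
  have hne {w g : Q} (hg : g ∉ centralizer {w}) : ⁅w, g⁆ ≠ 1 :=
    fun h => hg (commutatorElement_eq_one_iff_mem_centralizer.mp h)
  by_cases hC : centralizer {x} = centralizer {y}
  · obtain ⟨w, hw, hwx⟩ := hfac.exists_notMem hxc
    have hwy : w ∉ centralizer {y} := hC ▸ hwx
    rw [eq_of_card_dvd_prime_of_mem hp (hcard x (.inl hx)) (hcard w hw) (hne hwx)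
        (mem_range_commutatorLeftHom hc x w) (mem_range_commutatorLeftHom_right hc x w),
      eq_of_card_dvd_prime_of_mem hp (hcard y (.inl hy)) (hcard w hw) (hne hwy)
        (mem_range_commutatorLeftHom hc y w) (mem_range_commutatorLeftHom_right hc y w)]
  · have hxC := isCoatom_of_index_dvd_prime hp (hidx x (.inl hx)) hxc
    have hyC := isCoatom_of_index_dvd_prime hp (hidx y (.inl hy)) hyc
    obtain ⟨g, hgx, hgy⟩ := SetLike.not_le_iff_exists.mp fun h => hC ((hxC.le_iff_eq hyc).mp h).symm
    obtain ⟨h, hhy, hhx⟩ := SetLike.not_le_iff_exists.mp fun h => hC ((hyC.le_iff_eq hxc).mp h)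
    have hxyg : ⁅x * y, g⁆ = ⁅y, g⁆ := by
      rw [commutatorElement_mul_left hc, commutatorElement_eq_one_iff_mem_centralizer.mpr hgx,
        one_mul]
    have hxyh : ⁅x * y, h⁆ = ⁅x, h⁆ := by
      rw [commutatorElement_mul_left hc, commutatorElement_eq_one_iff_mem_centralizer.mpr hhy,
        mul_one]
    have hxy := hcard (x * y) (.inl (mul_mem hx hy))
    rw [eq_of_card_dvd_prime_of_mem hp (hcard x (.inl hx)) hxy (hne hhx)
        (mem_range_commutatorLeftHom hc x h) (hxyh ▸ mem_range_commutatorLeftHom hc (x * y) h),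
      eq_of_card_dvd_prime_of_mem hp (hcard y (.inl hy)) hxy (hne hgy)
        (mem_range_commutatorLeftHom hc y g) (hxyg ▸ mem_range_commutatorLeftHom hc (x * y) g)]

lemma exists_le_center_forall_commutatorElement_mem :
    ∃ U : Subgroup Q, U ≤ center Q ∧ Nat.card U ∣ p ∧ ∀ x ∈ S, ∀ g, ⁅x, g⁆ ∈ U := by
  by_cases hS : ∃ x₀ ∈ S, centralizer {x₀} ≠ ⊤
  · obtain ⟨x₀, hx₀, hx₀c⟩ := hS
    refine ⟨(commutatorLeftHom hc x₀).range, range_commutatorLeftHom_le_center hc x₀,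
      card_range_commutatorLeftHom hc x₀ ▸ hidx x₀ (.inl hx₀), fun x hx g => ?_⟩
    by_cases hxc : centralizer {x} = ⊤
    · rw [commutatorElement_eq_one_iff_mem_centralizer.mpr (hxc ▸ mem_top g)]
      exact one_mem _
    · exact range_commutatorLeftHom_eq hp hfac hidx hc hx hx₀ hxc hx₀c ▸
        mem_range_commutatorLeftHom hc x g
  · push Not at hS
    refine ⟨⊥, bot_le, by simp, fun x hx g => ?_⟩
    rw [commutatorElement_eq_one_iff_mem_centralizer.mpr (hS x hx ▸ mem_top g)]
    exact one_mem _

end Factorization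

theorem IsPGroup.commutator_le_frattini_le_center_of_isFactorization {Q : Type*} [Group Q]
    [Finite Q] {p : ℕ} (hp : p.Prime) (hQ : IsPGroup p Q) {S T : Subgroup Q}
    (hfac : IsFactorization S T) (hidx : ∀ x, x ∈ S ∨ x ∈ T → (centralizer {x}).index ∣ p) :
    commutator Q ≤ frattini Q ∧ frattini Q ≤ center Q ∧
      IsElementaryAbelian p (commutator Q) ∧ Nat.card (commutator Q) ≤ p ^ 2 := by
  have : Fact p.Prime := ⟨hp⟩
  have : Group.IsNilpotent Q := hQ.isNilpotent
  have hΦ := frattini_le_center_of_isFactorization hp hfac hidx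
  have hc : commutator Q ≤ center Q := commutator_le_frattini.trans hΦ
  obtain ⟨U, hUc, hUp, hU⟩ := exists_le_center_forall_commutatorElement_mem hp hfac hidx hc
  obtain ⟨V, hVc, hVp, hV⟩ :=
    exists_le_center_forall_commutatorElement_mem hp hfac.symm (fun x hx => hidx x hx.symm) hc
  have hle : commutator Q ≤ U ⊔ V := by
    rw [commutator_def, commutator_le]
    intro g₁ _ g₂ _
    obtain ⟨a, ha, b, hb, rfl⟩ := hfac g₁
    rw [commutatorElement_mul_left hc]
    exact mul_mem (mem_sup_left (hU a ha g₂)) (mem_sup_right (hV b hb g₂))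
  have : V.Normal := normal_of_le_center hVc
  refine ⟨commutator_le_frattini, hΦ, ⟨fun a b => ?_, fun a ha => ?_⟩, ?_⟩
  · exact Subtype.ext (mem_center_iff.mp (hc a.2) b).symm
  · exact orderOf_eq_prime (Subtype.ext (pow_eq_one_of_mem_sup hUc hUp hVp (hle a.2))) ha
  · calc Nat.card (commutator Q) ≤ Nat.card ↥(U ⊔ V) := card_le_of_le hle
      _ ≤ Nat.card U * Nat.card V := card_sup_le_mul U V
      _ ≤ p * p := Nat.mul_le_mul (Nat.le_of_dvd hp.pos hUp) (Nat.le_of_dvd hp.pos hVp)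
      _ = p ^ 2 := (sq p).symm

lemma index_centralizer_dvd_prime_of_surjective {G Q : Type*} [Group G] [Group Q] [Finite G]
    [Finite Q] {p : ℕ} (hp : p.Prime) (hQ : IsPGroup p Q) {f : G →* Q}
    (hf : Function.Surjective f) {A : Subgroup G}
    (hA : ∀ x ∈ A, (∃ n, orderOf x = p ^ n) → ¬ p ^ 2 ∣ classSize x) {x : Q} (hx : x ∈ A.map f) :
    (centralizer {x}).index ∣ p := by
  have : Fact p.Prime := ⟨hp⟩
  obtain ⟨w, hw, rfl⟩ := hx
  obtain ⟨m, hm, hwm⟩ := exists_pow_orderOf_eq_prime_pow hp w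
  have hmem : f w ∈ zpowers (f (w ^ m)) := by
    obtain ⟨k, hk⟩ := IsPGroup.iff_orderOf.mp hQ (f w)
    rw [map_pow, mem_zpowers_pow_iff, hk]
    exact Nat.Coprime.pow_right k (Nat.coprime_comm.mp ((hp.coprime_iff_not_dvd).mpr hm))
  have hdvd : (centralizer {f w}).index ∣ classSize (w ^ m) :=
    (index_dvd_of_le (centralizer_le_centralizer_of_mem_zpowers hmem)).trans
      (index_centralizer_map_dvd hf _)
  obtain ⟨N, hN⟩ := hQ.exists_card_eq
  obtain ⟨j, -, hj⟩ := (Nat.dvd_prime_pow hp).mp (hN ▸ index_dvd_card (centralizer {f w}))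
  rw [hj] at hdvd ⊢
  have hj1 : j ≤ 1 := by
    by_contra! h
    exact hA _ (pow_mem hw m) hwm ((pow_dvd_pow p h).trans hdvd)
  simpa using pow_dvd_pow p hj1

lemma Sylow.isComplement'_of_index_eq {G : Type*} [Group G] [Finite G] {p : ℕ} [Fact p.Prime]
    (P : Sylow p G) {N : Subgroup G} (hN : ¬ p ∣ Nat.card N) {n : ℕ} (hNi : N.index = p ^ n) :
    (P : Subgroup G).IsComplement' N := by
  have hp : p.Prime := Fact.out
  have hG : Nat.card G = Nat.card N * p ^ n := by rw [← hNi, card_mul_index]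
  have hP : Nat.card P = p ^ n := by
    rw [P.card_eq_multiplicity, hG,
      Nat.factorization_mul Nat.card_pos.ne' (pow_ne_zero n hp.ne_zero), Finsupp.add_apply, Nat.factorization_eq_zero_of_not_dvd hN, hp.factorization_pow,
      Finsupp.single_eq_same, zero_add]
  refine isComplement'_of_coprime (by rw [hP, hG, mul_comm]) ?_
  rw [hP]
  exact Nat.Coprime.pow_left n ((hp.coprime_iff_not_dvd).mpr hN)

/-- For a `p`-nilpotent factorised group whose `p`-elements in the factors
have class size not divisible by `p ^ 2`, a Sylow `p`-subgroup `P` satisfies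
`P' ≤ Φ(P) ≤ Z(P)` with `P'` elementary abelian of order at most `p ^ 2`. -/
theorem stmt_14 {G : Type*} [Group G] [Finite G] (A B : Subgroup G)
    (hfact : IsFactorization A B)
    (p : ℕ) (hp : p.Prime) (hnil : IsPNilpotent p G)
    (hclass : ∀ x : G, (x ∈ A ∨ x ∈ B) → (∃ n : ℕ, orderOf x = p ^ n) →
      ¬ p ^ 2 ∣ classSize x) :
    ∀ P : Sylow p G,
      commutator ↥(P : Subgroup G) ≤ frattini ↥(P : Subgroup G) ∧
      frattini ↥(P : Subgroup G) ≤ Subgroup.center ↥(P : Subgroup G) ∧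
      IsElementaryAbelian p ↥(commutator ↥(P : Subgroup G)) ∧
      Nat.card ↥(commutator ↥(P : Subgroup G)) ≤ p ^ 2 := by
  intro P
  have : Fact p.Prime := ⟨hp⟩
  obtain ⟨N, hN, hNp, n, hNi⟩ := hnil
  let e : G ⧸ N ≃* P := (P.isComplement'_of_index_eq hNp hNi).QuotientMulEquiv
  let f : G →* P := e.toMonoidHom.comp (QuotientGroup.mk' N)
  have hf : Function.Surjective f := e.surjective.comp (QuotientGroup.mk'_surjective N)
  have hidx (x : P) (hx : x ∈ A.map f ∨ x ∈ B.map f) : (centralizer {x}).index ∣ p :=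
    hx.elim
      (index_centralizer_dvd_prime_of_surjective hp P.isPGroup' hf fun a ha => hclass a (.inl ha))
      (index_centralizer_dvd_prime_of_surjective hp P.isPGroup' hf fun b hb => hclass b (.inr hb))
  exact P.isPGroup'.commutator_le_frattini_le_center_of_isFactorization hp (hfact.map hf) hidx
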